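/- Let p : {-1,1}^n → ℝ be (the restriction of) a multilinear polynomial with p(x) ≠ 0 for all x ∈ {-1,1}^n, and let f = sgn ∘ p. Then for every coordinate i, Inf_i[f] = E_x[ x_i · sgn(D_i p(x)) · f(x) ], where x is uniform on {-1,1}^n, D_i p(x) = (p(x^{i→1}) − p(x^{i→−1}))/2, and sgn(0) = 0. -/
import Mathlib


open Finset
open scoped Classical

noncomputable section

/-- The Boolean cube `{-1,1}^V` as a finset of functions `V → ℤ`. -/
def cube (V : Type*) [Fintype V] [DecidableEq V] : Finset (V → ℤ) :=
  Fintype.piFinset fun _ => ({-1, 1} : Finset ℤ)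

/-- Negate the `i`-th coordinate. -/
def flipAt {V : Type*} [DecidableEq V] (x : V → ℤ) (i : V) : V → ℤ :=
  Function.update x i (-(x i))

/-- Influence of coordinate `i` on `f`: the probability over a uniform point of the cube
that flipping coordinate `i` changes the value of `f`. -/
def coordInf {V : Type*} [Fintype V] [DecidableEq V] {α : Type*} (f : (V → ℤ) → α) (i : V) : ℝ :=
  (∑ x ∈ cube V, if f x ≠ f (flipAt x i) then (1 : ℝ) else 0) / (cube V).card

/-- Total influence of `f`. -/
def totalInf {V : Type*} [Fintype V] [DecidableEq V] {α : Type*} (f : (V → ℤ) → α) : ℝ :=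
  ∑ i : V, coordInf f i

/-- Sign function, with `sgn 0 = 0`. -/
def sgn (t : ℝ) : ℤ := if 0 < t then 1 else if t < 0 then -1 else 0

/-- A quadratic multilinear polynomial `∑_{i<j} a_{ij} x_i x_j + ∑_i b_i x_i + c`. -/
def quadPoly {V : Type*} [Fintype V] [LinearOrder V] (a : V → V → ℝ) (b : V → ℝ) (c : ℝ)
    (x : V → ℤ) : ℝ :=
  (∑ i : V, ∑ j : V, if i < j then a i j * x i * x j else 0) + (∑ i : V, b i * x i) + c

/-- `f` is a QTF supported on the graph `G`: it has a quadratic representation whose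
cross terms only involve edges of `G`, and whose polynomial is nonvanishing on the cube. -/
def IsQTFSupportedOn {V : Type*} [Fintype V] [LinearOrder V] (G : SimpleGraph V)
    (f : (V → ℤ) → ℤ) : Prop :=
  ∃ a b c, (∀ i j : V, i < j → a i j ≠ 0 → G.Adj i j) ∧
    (∀ x ∈ cube V, quadPoly a b c x ≠ 0) ∧
    (∀ x ∈ cube V, f x = sgn (quadPoly a b c x))

/-- The multilinear polynomial with coefficients `c`, evaluated on the cube:
`p(x) = Σ_S c_S · Π_{i ∈ S} x_i`. -/
def multilinear {n : ℕ} (c : Finset (Fin n) → ℝ) (x : Fin n → ℤ) : ℝ :=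
  ∑ S : Finset (Fin n), c S * ∏ i ∈ S, (x i : ℝ)

/-- The discrete derivative `D_i g(x) = (g(x^{i→1}) - g(x^{i→-1}))/2`. -/
def dDeriv {n : ℕ} (g : (Fin n → ℤ) → ℝ) (i : Fin n) (x : Fin n → ℤ) : ℝ :=
  (g (Function.update x i 1) - g (Function.update x i (-1))) / 2

lemma mem_cube_iff {V : Type*} [Fintype V] [DecidableEq V] {x : V → ℤ} :
    x ∈ cube V ↔ ∀ i, x i = -1 ∨ x i = 1 := by
  simp [cube, Fintype.mem_piFinset]

lemma flipAt_mem_cube {V : Type*} [Fintype V] [DecidableEq V] {x : V → ℤ} (hx : x ∈ cube V)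
    (i : V) : flipAt x i ∈ cube V := by
  rw [mem_cube_iff] at hx ⊢
  intro j
  rcases eq_or_ne j i with h | h
  · subst h; simp only [flipAt, Function.update_self]
    rcases hx j with h' | h' <;> simp [h']
  · simpa [flipAt, Function.update_of_ne h] using hx j

lemma flipAt_flipAt {V : Type*} [DecidableEq V] (x : V → ℤ) (i : V) :
    flipAt (flipAt x i) i = x := by
  ext j
  rcases eq_or_ne j i with h | h
  · subst h; simp [flipAt]
  · simp [flipAt, Function.update_of_ne h]

lemma update_flipAt {V : Type*} [DecidableEq V] (x : V → ℤ) (i : V) (t : ℤ) :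
    Function.update (flipAt x i) i t = Function.update x i t := by
  simp [flipAt, Function.update_idem]

lemma dDeriv_flipAt {n : ℕ} (g : (Fin n → ℤ) → ℝ) (i : Fin n) (x : Fin n → ℤ) :
    dDeriv g i (flipAt x i) = dDeriv g i x := by
  simp [dDeriv, update_flipAt]

lemma sgn_of_pos {t : ℝ} (h : 0 < t) : sgn t = 1 := if_pos h

lemma sgn_of_neg {t : ℝ} (h : t < 0) : sgn t = -1 := by
  simp [sgn, h, not_lt.mpr h.le, asymm h]

lemma key_sgn (u v : ℝ) (hu : u ≠ 0) (hv : v ≠ 0) :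
    ((sgn ((u - v) / 2) : ℤ) : ℝ) * (((sgn u : ℤ) : ℝ) - ((sgn v : ℤ) : ℝ)) =
      2 * (if sgn u ≠ sgn v then (1 : ℝ) else 0) := by
  rcases hu.lt_or_gt with h1 | h1 <;> rcases hv.lt_or_gt with h2 | h2
  · rw [sgn_of_neg h1, sgn_of_neg h2]; simp
  · rw [sgn_of_neg h1, sgn_of_pos h2, sgn_of_neg (by linarith : (u - v) / 2 < 0)]
    norm_num
  · rw [sgn_of_pos h1, sgn_of_neg h2, sgn_of_pos (by linarith : 0 < (u - v) / 2)]
    norm_num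
  · rw [sgn_of_pos h1, sgn_of_pos h2]; simp

/-- For a multilinear polynomial `p` nonvanishing on the cube and `f = sgn ∘ p`, the
influence of coordinate `i` equals `E_x[x_i · sgn(D_i p(x)) · f(x)]`. -/
theorem influence_eq_correlation {n : ℕ} (c : Finset (Fin n) → ℝ)
    (hnz : ∀ x ∈ cube (Fin n), multilinear c x ≠ 0)
    (f : (Fin n → ℤ) → ℤ)
    (hf : ∀ x ∈ cube (Fin n), f x = sgn (multilinear c x)) (i : Fin n) :
    coordInf f i =
      (∑ x ∈ cube (Fin n),
        (x i : ℝ) * (sgn (dDeriv (multilinear c) i x) : ℝ) * (f x : ℝ)) /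
        (cube (Fin n)).card := by
  unfold coordInf
  congr 1
  -- pointwise pairing identity
  have hpt : ∀ x ∈ cube (Fin n),
      (x i : ℝ) * (sgn (dDeriv (multilinear c) i x) : ℝ) *
        ((f x : ℝ) - (f (flipAt x i) : ℝ)) =
      2 * (if f x ≠ f (flipAt x i) then (1 : ℝ) else 0) := by
    intro x hx
    have hxf : flipAt x i ∈ cube (Fin n) := flipAt_mem_cube hx i
    set u := multilinear c (Function.update x i 1) with hu
    set v := multilinear c (Function.update x i (-1)) with hv
    have hd : dDeriv (multilinear c) i x = (u - v) / 2 := rfl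
    rcases (mem_cube_iff.mp hx) i with he | he
    · -- x i = -1 : x = update x i (-1), flip = update x i 1
      have hx1 : Function.update x i (-1) = x := by
        rw [← he]; exact Function.update_eq_self i x
      have hx2 : flipAt x i = Function.update x i 1 := by
        unfold flipAt; rw [he]; norm_num
      have hfx : f x = sgn v := by rw [hf x hx, ← hx1]
      have hffx : f (flipAt x i) = sgn u := by rw [hf _ hxf, hx2]
      have hune : u ≠ 0 := by rw [hu, ← hx2]; exact hnz _ hxf
      have hvne : v ≠ 0 := by rw [hv, hx1]; exact hnz _ hx
      rw [hd, hfx, hffx, he]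
      have := key_sgn u v hune hvne
      push_cast at this ⊢
      rw [show (if sgn v ≠ sgn u then (1:ℝ) else 0) = (if sgn u ≠ sgn v then (1:ℝ) else 0) by
        simp [ne_comm]]
      linarith [this]
    · have hx1 : Function.update x i 1 = x := by
        rw [← he]; exact Function.update_eq_self i x
      have hx2 : flipAt x i = Function.update x i (-1) := by
        unfold flipAt; rw [he]
      have hfx : f x = sgn u := by rw [hf x hx, ← hx1]
      have hffx : f (flipAt x i) = sgn v := by rw [hf _ hxf, hx2]
      have hune : u ≠ 0 := by rw [hu, hx1]; exact hnz _ hx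
      have hvne : v ≠ 0 := by rw [hv, ← hx2]; exact hnz _ hxf
      rw [hd, hfx, hffx, he]
      have := key_sgn u v hune hvne
      push_cast at this ⊢
      linarith [this]
  -- reindex by flipAt
  have hre : (∑ x ∈ cube (Fin n),
      (x i : ℝ) * (sgn (dDeriv (multilinear c) i x) : ℝ) * (f x : ℝ)) =
      ∑ x ∈ cube (Fin n),
        (-(x i) : ℝ) * (sgn (dDeriv (multilinear c) i x) : ℝ) * (f (flipAt x i) : ℝ) := by
    refine Finset.sum_nbij' (fun x => flipAt x i) (fun x => flipAt x i)
      (fun x hx => flipAt_mem_cube hx i) (fun x hx => flipAt_mem_cube hx i)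
      (fun x _ => flipAt_flipAt x i) (fun x _ => flipAt_flipAt x i) ?_
    intro x hx
    have h1 : (flipAt x i) i = -(x i) := by simp [flipAt]
    simp only [dDeriv_flipAt, flipAt_flipAt, h1]
    push_cast
    ring
  have h2 : (2 : ℝ) * (∑ x ∈ cube (Fin n),
      (x i : ℝ) * (sgn (dDeriv (multilinear c) i x) : ℝ) * (f x : ℝ)) =
      2 * ∑ x ∈ cube (Fin n), (if f x ≠ f (flipAt x i) then (1 : ℝ) else 0) := by
    rw [two_mul]
    nth_rewrite 2 [hre]
    rw [← Finset.sum_add_distrib, Finset.mul_sum]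
    refine Finset.sum_congr rfl fun x hx => ?_
    have := hpt x hx
    linarith [this]
  have key := (mul_left_cancel₀ (by norm_num : (2:ℝ) ≠ 0) h2).symm
  convert key using 2 with x
  congr
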